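/- (Theorem 4, regret of DOPA with Fréchet ambiguity sets.) Let K ≥ 1 and let F : ℝ → ℝ be a marginal generator with F(s) > 0 for all s in its domain (so that the marginal CDFs F_k(s) = min{1, max{0, 1 − F(−s/η)}} satisfy F_k(s) < 1 for all s ∈ ℝ). Fix η > 0 and suppose there exist γ ∈ (1,2) and C > 0 such that F'(F^{-1}(p)) ≤ C p^γ for all p ∈ (0,1). Let f(s) = ∫_0^s F^{-1}(t) dt for s ∈ [0,1], and for u ∈ ℝ^K let p(u) ∈ Δ^K be the unique maximizer of max_{p ∈ Δ^K} [ Σ_{k=1}^K u_k p_k − η Σ_{k=1}^K f(p_k) ] (which is componentwise strictly positive). Then for every horizon T ≥ 1 and every deterministic non-oblivious adversary, the regret of the learner in the bandit protocol run with the arm-sampling map p(·) satisfies R(T) ≤ −η·K·f(1/K) + C·T·K^{2−γ}/(2η). -/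

import Mathlib

/-! Potential-function argument. Let `Φ u = max_{q ∈ Δ} (⟪u, q⟫ - η ∑ f (q k))`, attained at
`p u`. Since `f 0 = f 1 = 0`, `Φ u ≥ u k` for every arm `k`, and by Jensen
`Φ 0 ≤ -η K f (1/K)`. The estimate `û` is unbiased, so the regret is at most `Φ 0` plus the
expected one-round increments of `Φ (û t) - ∑ r_{t,a_t}`.

Along a coordinate, `s ↦ Φ (u + s e_a)` is convex with subgradient `p (u + s e_a) a`. The
first-order conditions `u k - η F⁻¹ (p u k) = const` and `F' (F⁻¹ q) ≤ C q ^ γ` show that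
lowering `u a` by `δ` lowers `p u a` by at most `C (p u a) ^ γ δ / η`. So the subgradient is
continuous, hence a derivative, and integrating it gives
`Φ (u + g e_a) ≤ Φ u + g p_a + C p_a ^ γ g ^ 2 / (2 η)` for `g ≤ 0`. With `g = r_a / p_a` the
expected increment is at most `C / (2 η) ∑ p_a ^ (γ - 1) ≤ C K ^ (2 - γ) / (2 η)`.
-/

open Set Filter MeasureTheory

noncomputable def simplex (K : ℕ) : Set (Fin K → ℝ) :=
  {p | (∀ k, 0 ≤ p k) ∧ ∑ k, p k = 1}

noncomputable def quantile (F : ℝ → ℝ) (s : ℝ) : ℝ := sInf {t | s ≤ F t}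

/- Histories of chosen arms are recorded as lists in reverse chronological order:
the head of the list is the most recently chosen arm.  A deterministic non-oblivious
adversary is a function `r : List (Fin K) → Fin K → ℝ` assigning a reward vector
to each history of previously chosen arms. -/

/-- Cumulative importance-weighted reward estimate `û` after the history `h`. -/
noncomputable def uhat {K : ℕ} (r : List (Fin K) → Fin K → ℝ)
    (p : (Fin K → ℝ) → (Fin K → ℝ)) : List (Fin K) → Fin K → ℝ
  | [] => fun _ => 0
  | a :: h => fun k =>
      uhat r p h k + (if k = a then r h a / p (uhat r p h) a else 0)

/-- Probability that the learner produces the history `h`. -/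
noncomputable def histProb {K : ℕ} (r : List (Fin K) → Fin K → ℝ)
    (p : (Fin K → ℝ) → (Fin K → ℝ)) : List (Fin K) → ℝ
  | [] => 1
  | a :: h => histProb r p h * p (uhat r p h) a

/-- Total reward collected by the learner along the history `h`. -/
noncomputable def cumReward {K : ℕ} (r : List (Fin K) → Fin K → ℝ) :
    List (Fin K) → ℝ
  | [] => 0
  | a :: h => cumReward r h + r h a

/-- Total reward that arm `k` would have collected along the history `h`. -/
noncomputable def cumArm {K : ℕ} (r : List (Fin K) → Fin K → ℝ) (k : Fin K) :
    List (Fin K) → ℝ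
  | [] => 0
  | _ :: h => cumArm r k h + r h k

/-- The regret `R(T) = max_k E[∑_t r_{t,k}] − E[∑_t r_{t,a_t}]`. -/
noncomputable def regret (K T : ℕ) (r : List (Fin K) → Fin K → ℝ)
    (p : (Fin K → ℝ) → (Fin K → ℝ)) : ℝ :=
  (⨆ k : Fin K, ∑ f : Fin T → Fin K,
      histProb r p (List.ofFn f).reverse * cumArm r k (List.ofFn f).reverse) -
    ∑ f : Fin T → Fin K,
      histProb r p (List.ofFn f).reverse * cumReward r (List.ofFn f).reverse

theorem hasDerivAt_of_forall_add_mul_le {h m : ℝ → ℝ} {x : ℝ}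
    (hsub : ∀ s t, h s + (t - s) * m s ≤ h t) (hm : ContinuousAt m x) :
    HasDerivAt h (m x) x := by
  rw [hasDerivAt_iff_isLittleO, Asymptotics.isLittleO_iff]
  intro c hc
  filter_upwards [Metric.continuousAt_iff'.mp hm c hc] with t ht
  rw [Real.dist_eq] at ht
  rw [Real.norm_eq_abs, Real.norm_eq_abs, smul_eq_mul]
  have hlow : 0 ≤ h t - h x - (t - x) * m x := by linarith [hsub x t]
  have hupp : h t - h x - (t - x) * m x ≤ (t - x) * (m t - m x) := by linarith [hsub t x]
  calc |h t - h x - (t - x) * m x| ≤ (t - x) * (m t - m x) := by rwa [abs_of_nonneg hlow]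
    _ ≤ |t - x| * |m t - m x| := (le_abs_self _).trans (abs_mul _ _).le
    _ ≤ c * |t - x| := by rw [mul_comm]; gcongr

theorem le_add_mul_add_sq_of_hasDerivAt {h m : ℝ → ℝ} {L g : ℝ}
    (hh : ∀ s, HasDerivAt h (m s) s) (hm : ∀ s ≤ 0, m 0 - m s ≤ L * -s) (hg : g ≤ 0) :
    h g ≤ h 0 + g * m 0 + L * g ^ 2 / 2 := by
  set φ := fun s => h s - s * m 0 - L * s ^ 2 / 2
  have hφ : ∀ s, HasDerivAt φ (m s - m 0 - L * s) s := fun s => by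
    have hlin : HasDerivAt (fun s => s * m 0) (m 0) s := by
      simpa using (hasDerivAt_id s).mul_const (m 0)
    have hsq : HasDerivAt (fun s => L * s ^ 2 / 2) (L * s) s :=
      (((hasDerivAt_pow 2 s).const_mul L).div_const 2).congr_deriv (by push_cast; ring)
    exact ((hh s).fun_sub hlin).fun_sub hsq
  have hmono : MonotoneOn φ (Iic 0) := by
    refine monotoneOn_of_deriv_nonneg (convex_Iic 0)
      (fun s _ => (hφ s).continuousAt.continuousWithinAt)
      (fun s _ => (hφ s).differentiableAt.differentiableWithinAt) fun s hs => ?_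
    rw [interior_Iic] at hs
    rw [(hφ s).deriv]
    linarith [hm s (le_of_lt hs)]
  have := hmono (Set.mem_Iic.2 hg) (Set.mem_Iic.2 le_rfl) hg
  simp only [φ] at this
  linarith

theorem ConvexOn.card_mul_le_sum {s : Set ℝ} {g : ℝ → ℝ} (hg : ConvexOn ℝ s g) {K : ℕ}
    {q : Fin K → ℝ} (hqs : ∀ k, q k ∈ s) (hq : ∑ k, q k = 1) :
    K * g (1 / K) ≤ ∑ k, g (q k) := by
  have hK : (K : ℝ) ≠ 0 := by
    rintro hK
    obtain rfl : K = 0 := by exact_mod_cast hK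
    simp at hq
  have := hg.map_sum_le (t := Finset.univ) (w := fun _ => (K : ℝ)⁻¹) (p := q)
    (fun _ _ => by positivity) (by simp [hK]) (fun k _ => hqs k)
  rw [← Finset.smul_sum, ← Finset.smul_sum, hq, smul_eq_mul, smul_eq_mul, mul_one] at this
  rw [one_div]
  calc K * g (K : ℝ)⁻¹ ≤ K * ((K : ℝ)⁻¹ * ∑ k, g (q k)) := by
        gcongr
    _ = ∑ k, g (q k) := by field_simp

theorem sum_rpow_le_of_mem_simplex {K : ℕ} {q : Fin K → ℝ} (hq : q ∈ simplex K) {r : ℝ}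
    (hr₀ : 0 ≤ r) (hr₁ : r ≤ 1) : ∑ k, q k ^ r ≤ (K : ℝ) ^ (1 - r) := by
  have := (Real.concaveOn_rpow hr₀ hr₁).neg.card_mul_le_sum (fun k => hq.1 k) hq.2
  have hK : (0 : ℝ) < K := by
    rcases K.eq_zero_or_pos with rfl | hK
    · simpa using hq.2
    · exact_mod_cast hK
  simp only [Pi.neg_apply, Finset.sum_neg_distrib, mul_neg, neg_le_neg_iff] at this
  rwa [one_div, Real.inv_rpow hK.le, ← Real.rpow_neg_one, ← Real.rpow_mul hK.le, mul_comm,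
    ← Real.rpow_add_one hK.ne', show r * -1 + 1 = 1 - r by ring] at this

section Quantile

variable {F : ℝ → ℝ}

theorem Ioo_subset_range_of_continuous (hFc : Continuous F)
    (hFbot : ∀ ε > (0:ℝ), ∃ s, F s < ε) (hFtop : ∀ ε > (0:ℝ), ∃ s, 1 - ε < F s) :
    Ioo 0 1 ⊆ range F := fun q hq => by
  obtain ⟨a, ha⟩ := hFbot q hq.1
  obtain ⟨b, hb⟩ := hFtop (1 - q) (by linarith [hq.2])
  exact intermediate_value_univ a b hFc ⟨ha.le, by linarith⟩

theorem quantile_apply (hF : StrictMono F) (t : ℝ) : quantile F (F t) = t := by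
  have : {s | F t ≤ F s} = Ici t := by ext s; simp [hF.le_iff_le]
  rw [quantile, this, csInf_Ici]

theorem apply_quantile (hF : StrictMono F) (hrange : Ioo 0 1 ⊆ range F) {q : ℝ}
    (hq : q ∈ Ioo 0 1) : F (quantile F q) = q := by
  obtain ⟨t, rfl⟩ := hrange hq
  rw [quantile_apply hF]

theorem quantile_strictMonoOn (hF : StrictMono F) (hrange : Ioo 0 1 ⊆ range F) :
    StrictMonoOn (quantile F) (Ioo 0 1) := fun x hx y hy hxy => by
  by_contra! h
  have := hF.monotone h
  rw [apply_quantile hF hrange hx, apply_quantile hF hrange hy] at this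
  linarith

theorem continuousOn_quantile (hF : StrictMono F) (hFc : Continuous F)
    (hrange : Ioo 0 1 ⊆ range F) : ContinuousOn (quantile F) (Ioo 0 1) := fun q hq => by
  have himage : quantile F '' Ioo 0 1 = F ⁻¹' Ioo 0 1 := by
    ext t
    constructor
    · rintro ⟨x, hx, rfl⟩
      rwa [mem_preimage, apply_quantile hF hrange hx]
    · exact fun ht => ⟨F t, ht, quantile_apply hF t⟩
  refine ((quantile_strictMonoOn hF hrange).continuousAt_of_image_mem_nhds
    (isOpen_Ioo.mem_nhds hq) ?_).continuousWithinAt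
  rw [himage]
  exact (isOpen_Ioo.preimage hFc).mem_nhds (by rwa [mem_preimage, apply_quantile hF hrange hq])

theorem sub_le_mul_quantile_sub (hF : StrictMono F) (hrange : Ioo 0 1 ⊆ range F)
    {F' : ℝ → ℝ} (hF' : ∀ s, HasDerivAt F (F' s) s) {γ C : ℝ} (hγ : 0 ≤ γ) (hC : 0 ≤ C)
    (hgrowth : ∀ q ∈ Ioo (0:ℝ) 1, F' (quantile F q) ≤ C * q ^ γ)
    {x y : ℝ} (hy : 0 < y) (hyx : y ≤ x) (hx : x < 1) :
    x - y ≤ C * x ^ γ * (quantile F x - quantile F y) := by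
  have hxI : x ∈ Ioo 0 1 := ⟨hy.trans_le hyx, hx⟩
  have hyI : y ∈ Ioo 0 1 := ⟨hy, hyx.trans_lt hx⟩
  have hQ : quantile F y ≤ quantile F x :=
    (quantile_strictMonoOn hF hrange).monotoneOn hyI hxI hyx
  have hderiv : ∀ s ∈ interior (Icc (quantile F y) (quantile F x)), deriv F s ≤ C * x ^ γ := by
    intro s hs
    rw [interior_Icc] at hs
    have hFs : F s ∈ Ioo y x := by
      rw [← apply_quantile hF hrange hyI, ← apply_quantile hF hrange hxI]
      exact ⟨hF hs.1, hF hs.2⟩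
    calc deriv F s = F' (quantile F (F s)) := by rw [quantile_apply hF, (hF' s).deriv]
      _ ≤ C * F s ^ γ := hgrowth _ ⟨hy.trans hFs.1, hFs.2.trans hx⟩
      _ ≤ C * x ^ γ := by gcongr; exacts [hy.le.trans hFs.1.le, hFs.2.le]
  have := (convex_Icc _ _).image_sub_le_mul_sub_of_deriv_le
    (fun s _ => (hF' s).continuousAt.continuousWithinAt)
    (fun s _ => (hF' s).differentiableAt.differentiableWithinAt) hderiv
    _ (left_mem_Icc.2 hQ) _ (right_mem_Icc.2 hQ) hQ
  rwa [apply_quantile hF hrange hxI, apply_quantile hF hrange hyI] at this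

variable {f : ℝ → ℝ}

theorem hasDerivAt_of_eq_integral_quantile (hF : StrictMono F) (hFc : Continuous F)
    (hrange : Ioo 0 1 ⊆ range F) (hFint : IntegrableOn (quantile F) (Ioo 0 1))
    (hf : ∀ s ∈ Icc (0:ℝ) 1, f s = ∫ t in (0:ℝ)..s, quantile F t) {s : ℝ} (hs : s ∈ Ioo 0 1) :
    HasDerivAt f (quantile F s) s := by
  have hcont := continuousOn_quantile hF hFc hrange
  have hint : IntervalIntegrable (quantile F) volume 0 s := by
    rw [intervalIntegrable_iff_integrableOn_Ioc_of_le hs.1.le]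
    exact hFint.mono_set (Ioc_subset_Ioo_right hs.2)
  have hprim := intervalIntegral.integral_hasDerivAt_right hint
    (hcont.stronglyMeasurableAtFilter isOpen_Ioo s hs) (hcont.continuousAt (isOpen_Ioo.mem_nhds hs))
  refine hprim.congr_of_eventuallyEq ?_
  filter_upwards [isOpen_Ioo.mem_nhds hs] with x hx
  exact hf x (Ioo_subset_Icc_self hx)

theorem convexOn_of_eq_integral_quantile (hF : StrictMono F) (hFc : Continuous F)
    (hrange : Ioo 0 1 ⊆ range F) (hFint : IntegrableOn (quantile F) (Ioo 0 1))
    (hf : ∀ s ∈ Icc (0:ℝ) 1, f s = ∫ t in (0:ℝ)..s, quantile F t) :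
    ConvexOn ℝ (Icc 0 1) f := by
  have hderiv : ∀ s ∈ interior (Icc (0:ℝ) 1), HasDerivAt f (quantile F s) s := fun s hs =>
    hasDerivAt_of_eq_integral_quantile hF hFc hrange hFint hf (by rwa [interior_Icc] at hs)
  have hprim : ContinuousOn (fun s => ∫ t in (0:ℝ)..s, quantile F t) (Icc 0 1) := by
    rw [← uIcc_of_le (zero_le_one' ℝ)]
    refine intervalIntegral.continuousOn_primitive_interval ?_
    rwa [uIcc_of_le (zero_le_one' ℝ), integrableOn_Icc_iff_integrableOn_Ioo]
  refine MonotoneOn.convexOn_of_deriv (convex_Icc 0 1) (hprim.congr hf)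
    (fun s hs => (hderiv s hs).differentiableAt.differentiableWithinAt) ?_
  intro x hx y hy hxy
  rw [(hderiv x hx).deriv, (hderiv y hy).deriv]
  rw [interior_Icc] at hx hy
  exact (quantile_strictMonoOn hF hrange).monotoneOn hx hy hxy

end Quantile

section Ftrl

variable {K : ℕ}

noncomputable def ftrlObjective (η : ℝ) (f : ℝ → ℝ) (u q : Fin K → ℝ) : ℝ :=
  ∑ k, u k * q k - η * ∑ k, f (q k)

structure IsFtrlMap (η : ℝ) (f : ℝ → ℝ) (p : (Fin K → ℝ) → Fin K → ℝ) : Prop where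
  mem_simplex : ∀ u, p u ∈ simplex K
  pos : ∀ u k, 0 < p u k
  isMaxOn : ∀ u, IsMaxOn (ftrlObjective η f u) (simplex K) (p u)

noncomputable def ftrlPotential (η : ℝ) (f : ℝ → ℝ) (p : (Fin K → ℝ) → Fin K → ℝ)
    (u : Fin K → ℝ) : ℝ :=
  ftrlObjective η f u (p u)

variable {η : ℝ} {f : ℝ → ℝ}

theorem ftrlObjective_add_single (u : Fin K → ℝ) (a : Fin K) (s : ℝ) (q : Fin K → ℝ) :
    ftrlObjective η f (u + Pi.single a s) q = ftrlObjective η f u q + s * q a := by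
  simp only [ftrlObjective, Pi.add_apply, add_mul, Finset.sum_add_distrib, Pi.single_apply,
    ite_mul, zero_mul, Finset.sum_ite_eq', Finset.mem_univ, if_true]
  ring

theorem single_mem_simplex (k : Fin K) : Pi.single k 1 ∈ simplex K :=
  ⟨fun j => by by_cases hj : j = k <;> simp [hj], by simp⟩

theorem ftrlObjective_single (hf₀ : f 0 = 0) (hf₁ : f 1 = 0) (u : Fin K → ℝ) (k : Fin K) :
    ftrlObjective η f u (Pi.single k 1) = u k := by
  have : ∀ j, f ((Pi.single k 1 : Fin K → ℝ) j) = 0 := fun j => by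
    by_cases hj : j = k <;> simp [hj, hf₀, hf₁]
  rw [ftrlObjective, Finset.sum_eq_zero fun j _ => this j]
  simp [Pi.single_apply]

namespace IsFtrlMap

variable {p : (Fin K → ℝ) → Fin K → ℝ}

theorem sum_eq_one (hp : IsFtrlMap η f p) (u : Fin K → ℝ) : ∑ k, p u k = 1 :=
  (hp.mem_simplex u).2

theorem apply_le_one (hp : IsFtrlMap η f p) (u : Fin K → ℝ) (k : Fin K) : p u k ≤ 1 :=
  hp.sum_eq_one u ▸ Finset.single_le_sum (fun i _ => (hp.pos u i).le) (Finset.mem_univ k)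

theorem apply_lt_one [Nontrivial (Fin K)] (hp : IsFtrlMap η f p) (u : Fin K → ℝ) (k : Fin K) :
    p u k < 1 := by
  obtain ⟨j, hj⟩ := exists_ne k
  have := Finset.add_le_sum (fun i _ => (hp.pos u i).le) (Finset.mem_univ k)
    (Finset.mem_univ j) hj.symm
  linarith [hp.sum_eq_one u, hp.pos u j]

theorem objective_le_potential (hp : IsFtrlMap η f p) (u : Fin K → ℝ) {q : Fin K → ℝ}
    (hq : q ∈ simplex K) : ftrlObjective η f u q ≤ ftrlPotential η f p u :=
  hp.isMaxOn u hq

theorem apply_le_potential (hp : IsFtrlMap η f p) (hf₀ : f 0 = 0) (hf₁ : f 1 = 0)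
    (u : Fin K → ℝ) (k : Fin K) : u k ≤ ftrlPotential η f p u :=
  ftrlObjective_single hf₀ hf₁ u k ▸ hp.objective_le_potential u (single_mem_simplex k)

theorem potential_add_mul_le (hp : IsFtrlMap η f p) (u : Fin K → ℝ) (a : Fin K) (s : ℝ) :
    ftrlPotential η f p u + s * p u a ≤ ftrlPotential η f p (u + Pi.single a s) := by
  rw [ftrlPotential, ← ftrlObjective_add_single]
  exact hp.objective_le_potential _ (hp.mem_simplex u)

theorem monotone_apply_add_single (hp : IsFtrlMap η f p) (u : Fin K → ℝ) (a : Fin K) :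
    Monotone fun s => p (u + Pi.single a s) a := by
  intro s t hst
  have h₁ := hp.potential_add_mul_le (u + Pi.single a s) a (t - s)
  have h₂ := hp.potential_add_mul_le (u + Pi.single a t) a (s - t)
  rw [add_assoc, ← Pi.single_add, add_sub_cancel] at h₁ h₂
  rcases hst.eq_or_lt with rfl | hlt
  · rfl
  · have : 0 ≤ (t - s) * (p (u + Pi.single a t) a - p (u + Pi.single a s) a) := by linarith
    exact sub_nonneg.1 (nonneg_of_mul_nonneg_right this (sub_pos.2 hlt))

/-- First-order optimality: at an interior maximiser the gradient of the objective is
orthogonal to every direction tangent to the simplex. -/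
theorem sum_sub_mul_deriv_mul_eq_zero (hp : IsFtrlMap η f p) (u : Fin K → ℝ) {f' : ℝ → ℝ}
    (hf' : ∀ i, HasDerivAt f (f' (p u i)) (p u i)) {d : Fin K → ℝ} (hd : ∑ i, d i = 0) :
    ∑ i, (u i - η * f' (p u i)) * d i = 0 := by
  set g : ℝ → ℝ := fun ε => ftrlObjective η f u (fun i => p u i + ε * d i)
  have hline : ∀ i, HasDerivAt (fun ε : ℝ => p u i + ε * d i) (d i) 0 := fun i => by
    simpa using ((hasDerivAt_id (0:ℝ)).mul_const (d i)).const_add (p u i)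
  have hg : HasDerivAt g (∑ i, (u i - η * f' (p u i)) * d i) 0 := by
    refine ((HasDerivAt.fun_sum fun i _ => (hline i).const_mul (u i)).fun_sub
      ((HasDerivAt.fun_sum fun i _ => (hf' i).comp_of_eq 0 (hline i) (by simp)).const_mul η))
      |>.congr_deriv ?_
    simp only [sub_mul, Finset.sum_sub_distrib, Finset.mul_sum, mul_assoc]
  have hmax : IsLocalMax g 0 := by
    have hnonneg : ∀ᶠ ε in nhds (0:ℝ), ∀ i, 0 ≤ p u i + ε * d i := by
      refine eventually_all.2 fun i => ?_
      exact ((hline i).continuousAt.tendsto.eventually_const_lt (by simpa using hp.pos u i)).mono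
        fun _ h => h.le
    filter_upwards [hnonneg] with ε hε
    have hmem : (fun i => p u i + ε * d i) ∈ simplex K := ⟨hε, by
      simp [Finset.sum_add_distrib, ← Finset.mul_sum, hd, hp.sum_eq_one u]⟩
    simpa [g, ftrlPotential] using hp.objective_le_potential u hmem
  exact hmax.hasDerivAt_eq_zero hg

theorem sub_mul_deriv_eq (hp : IsFtrlMap η f p) (u : Fin K → ℝ) {f' : ℝ → ℝ}
    (hf' : ∀ i, HasDerivAt f (f' (p u i)) (p u i)) (k j : Fin K) :
    u k - η * f' (p u k) = u j - η * f' (p u j) := by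
  have := hp.sum_sub_mul_deriv_mul_eq_zero u hf' (d := Pi.single k 1 - Pi.single j 1) (by simp)
  simpa [mul_sub, Finset.sum_sub_distrib, Pi.single_apply, sub_eq_zero] using this

theorem apply_sub_apply_add_single_le (hp : IsFtrlMap η f p) (hη : 0 < η) {Q : ℝ → ℝ}
    (hf' : ∀ x ∈ Ioo (0:ℝ) 1, HasDerivAt f (Q x) x) {C γ : ℝ} (hC : 0 ≤ C)
    (hgrowth : ∀ x y : ℝ, 0 < y → y ≤ x → x < 1 → x - y ≤ C * x ^ γ * (Q x - Q y))
    (u : Fin K → ℝ) (a : Fin K) {s : ℝ} (hs : s ≤ 0) :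
    p u a - p (u + Pi.single a s) a ≤ C * p u a ^ γ * -s / η := by
  set u' := u + Pi.single a s
  rcases le_or_gt (p u a) (p u' a) with hle | hlt
  · have : 0 ≤ C * p u a ^ γ * -s / η := div_nonneg
      (mul_nonneg (mul_nonneg hC (Real.rpow_nonneg (hp.pos u a).le γ)) (neg_nonneg.2 hs)) hη.le
    linarith
  -- Some other arm `k` gains weight; its first-order condition caps the drop of `Q (p u a)`.
  obtain ⟨k, hka, hk⟩ : ∃ k, k ≠ a ∧ p u k < p u' k := by
    by_contra! h
    have := Finset.sum_lt_sum (fun i _ => if hi : i = a then hi ▸ hlt.le else h i hi)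
      ⟨a, Finset.mem_univ a, hlt⟩
    linarith [hp.sum_eq_one u, hp.sum_eq_one u']
  have : Nontrivial (Fin K) := ⟨⟨k, a, hka⟩⟩
  have hQ : ∀ v i, HasDerivAt f (Q (p v i)) (p v i) := fun v i =>
    hf' _ ⟨hp.pos v i, hp.apply_lt_one v i⟩
  have hkkt := hp.sub_mul_deriv_eq u (hQ u) a k
  have hkkt' := hp.sub_mul_deriv_eq u' (hQ u') a k
  simp only [u', Pi.add_apply, Pi.single_eq_same, Pi.single_eq_of_ne hka, add_zero] at hkkt'
  have hQk : 0 < Q (p u' k) - Q (p u k) := by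
    refine pos_of_mul_pos_right ?_ (by have := (hp.pos u' k).le; positivity : 0 ≤ C * p u' k ^ γ)
    linarith [hgrowth _ _ (hp.pos u k) hk.le (hp.apply_lt_one u' k)]
  calc p u a - p u' a ≤ C * p u a ^ γ * (Q (p u a) - Q (p u' a)) :=
        hgrowth _ _ (hp.pos u' a) hlt.le (hp.apply_lt_one u a)
    _ ≤ C * p u a ^ γ * (-s / η) := by
        have := (hp.pos u a).le
        gcongr
        rw [le_div_iff₀ hη]
        linarith [mul_pos hη hQk]
    _ = C * p u a ^ γ * -s / η := by ring

theorem potential_add_single_le (hp : IsFtrlMap η f p) (hη : 0 < η) {Q : ℝ → ℝ}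
    (hf' : ∀ x ∈ Ioo (0:ℝ) 1, HasDerivAt f (Q x) x) {C γ : ℝ} (hC : 0 ≤ C) (hγ : 0 ≤ γ)
    (hgrowth : ∀ x y : ℝ, 0 < y → y ≤ x → x < 1 → x - y ≤ C * x ^ γ * (Q x - Q y))
    (u : Fin K → ℝ) (a : Fin K) {g : ℝ} (hg : g ≤ 0) :
    ftrlPotential η f p (u + Pi.single a g) ≤
      ftrlPotential η f p u + g * p u a + C * p u a ^ γ * g ^ 2 / (2 * η) := by
  set h := fun s => ftrlPotential η f p (u + Pi.single a s)
  set m := fun s => p (u + Pi.single a s) a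
  have hshift : ∀ s t : ℝ,
      u + Pi.single a s + Pi.single a t = u + (Pi.single a (s + t) : Fin K → ℝ) := by
    simp [add_assoc, Pi.single_add]
  have hsub : ∀ s t, h s + (t - s) * m s ≤ h t := fun s t => by
    have := hp.potential_add_mul_le (u + Pi.single a s) a (t - s)
    rwa [hshift, add_sub_cancel] at this
  have hstab : ∀ s t, t ≤ s → m s - m t ≤ C * m s ^ γ * (s - t) / η := fun s t hts => by
    have := hp.apply_sub_apply_add_single_le hη hf' hC hgrowth (u + Pi.single a s) a
      (s := t - s) (by linarith)
    rwa [hshift, add_sub_cancel, neg_sub] at this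
  have hlip : LipschitzWith ⟨C / η, by positivity⟩ m := LipschitzWith.of_dist_le_mul fun s t => by
    wlog hts : t ≤ s generalizing s t
    · rw [dist_comm, dist_comm s]; exact this t s (le_of_not_ge hts)
    rw [Real.dist_eq, Real.dist_eq, abs_of_nonneg (sub_nonneg.2 hts),
      abs_of_nonneg (sub_nonneg.2 (hp.monotone_apply_add_single u a hts))]
    show m s - m t ≤ C / η * (s - t)
    have hms : m s ^ γ ≤ 1 := Real.rpow_le_one (hp.pos _ a).le (hp.apply_le_one _ a) hγ
    calc m s - m t ≤ C * m s ^ γ * (s - t) / η := hstab s t hts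
      _ ≤ C * 1 * (s - t) / η := by have := sub_nonneg.2 hts; gcongr
      _ = C / η * (s - t) := by ring
  have := le_add_mul_add_sq_of_hasDerivAt (L := C * m 0 ^ γ / η)
    (fun s => hasDerivAt_of_forall_add_mul_le hsub hlip.continuous.continuousAt)
    (fun s hs => (hstab 0 s hs).trans_eq (by ring)) hg
  simp only [h, m, Pi.single_zero, add_zero] at this
  exact this.trans_eq (by ring)

theorem sum_mul_potential_add_single_sub_le (hp : IsFtrlMap η f p) (hη : 0 < η) {Q : ℝ → ℝ}
    (hf' : ∀ x ∈ Ioo (0:ℝ) 1, HasDerivAt f (Q x) x) {C γ : ℝ} (hC : 0 ≤ C) (hγ₁ : 1 ≤ γ)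
    (hγ₂ : γ ≤ 2)
    (hgrowth : ∀ x y : ℝ, 0 < y → y ≤ x → x < 1 → x - y ≤ C * x ^ γ * (Q x - Q y))
    (u : Fin K → ℝ) {x : Fin K → ℝ} (hx : ∀ a, x a ∈ Icc (-1:ℝ) 0) :
    ∑ a, p u a * (ftrlPotential η f p (u + Pi.single a (x a / p u a)) - x a) ≤
      ftrlPotential η f p u + C * (K : ℝ) ^ (2 - γ) / (2 * η) := by
  have hterm : ∀ a, p u a * (ftrlPotential η f p (u + Pi.single a (x a / p u a)) - x a) ≤
      p u a * ftrlPotential η f p u + C / (2 * η) * p u a ^ (γ - 1) := by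
    intro a
    have hpa := hp.pos u a
    have hsmooth := hp.potential_add_single_le hη hf' hC (by linarith) hgrowth u a
      (div_nonpos_of_nonpos_of_nonneg (hx a).2 hpa.le)
    have hsq : x a ^ 2 ≤ 1 := by nlinarith [(hx a).1, (hx a).2]
    have hpow : 0 ≤ C / (2 * η) * p u a ^ (γ - 1) := by positivity
    calc p u a * (ftrlPotential η f p (u + Pi.single a (x a / p u a)) - x a)
        ≤ p u a * (ftrlPotential η f p u + x a / p u a * p u a
            + C * p u a ^ γ * (x a / p u a) ^ 2 / (2 * η) - x a) :=
          mul_le_mul_of_nonneg_left (by linarith) hpa.le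
      _ = p u a * ftrlPotential η f p u + C / (2 * η) * p u a ^ (γ - 1) * x a ^ 2 := by
        rw [Real.rpow_sub_one hpa.ne']
        field_simp
        ring
      _ ≤ p u a * ftrlPotential η f p u + C / (2 * η) * p u a ^ (γ - 1) := by
        have := mul_le_mul_of_nonneg_left hsq hpow
        linarith
  calc ∑ a, p u a * (ftrlPotential η f p (u + Pi.single a (x a / p u a)) - x a)
      ≤ ∑ a, (p u a * ftrlPotential η f p u + C / (2 * η) * p u a ^ (γ - 1)) := by
        gcongr with a
        exact hterm a
    _ = ftrlPotential η f p u + C / (2 * η) * ∑ a, p u a ^ (γ - 1) := by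
        rw [Finset.sum_add_distrib, ← Finset.sum_mul, hp.sum_eq_one, one_mul, Finset.mul_sum]
    _ ≤ ftrlPotential η f p u + C / (2 * η) * (K : ℝ) ^ (1 - (γ - 1)) := by
        gcongr
        exact sum_rpow_le_of_mem_simplex (hp.mem_simplex u) (by linarith) (by linarith)
    _ = ftrlPotential η f p u + C * (K : ℝ) ^ (2 - γ) / (2 * η) := by
        rw [show 1 - (γ - 1) = 2 - γ by ring]
        ring

end IsFtrlMap

end Ftrl

section Bandit

variable {K : ℕ} (r : List (Fin K) → Fin K → ℝ) (p : (Fin K → ℝ) → Fin K → ℝ)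

theorem sum_ofFn_reverse_succ (T : ℕ) (G : List (Fin K) → ℝ) :
    ∑ ω : Fin (T + 1) → Fin K, G (List.ofFn ω).reverse =
      ∑ ω : Fin T → Fin K, ∑ a, G (a :: (List.ofFn ω).reverse) := by
  rw [← (Fin.snocEquiv fun _ => Fin K).sum_comp, Fintype.sum_prod_type, Finset.sum_comm]
  refine Finset.sum_congr rfl fun ω _ => Finset.sum_congr rfl fun a _ => ?_
  show G (List.ofFn (Fin.snoc ω a : Fin (T + 1) → Fin K)).reverse = _
  rw [List.ofFn_succ']
  simp

noncomputable def expectation (T : ℕ) (G : List (Fin K) → ℝ) : ℝ :=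
  ∑ ω : Fin T → Fin K, histProb r p (List.ofFn ω).reverse * G (List.ofFn ω).reverse

theorem regret_eq_expectation (T : ℕ) :
    regret K T r p = (⨆ k, expectation r p T (cumArm r k)) - expectation r p T (cumReward r) :=
  rfl

theorem expectation_zero (G : List (Fin K) → ℝ) : expectation r p 0 G = G [] := by
  simp [expectation, histProb]

theorem expectation_succ (T : ℕ) (G : List (Fin K) → ℝ) :
    expectation r p (T + 1) G =
      expectation r p T fun h => ∑ a, p (uhat r p h) a * G (a :: h) := by
  rw [expectation, sum_ofFn_reverse_succ T fun h => histProb r p h * G h]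
  simp only [expectation, histProb, Finset.mul_sum, mul_assoc]

theorem expectation_add (T : ℕ) (G G' : List (Fin K) → ℝ) :
    expectation r p T (fun h => G h + G' h) = expectation r p T G + expectation r p T G' := by
  simp only [expectation, mul_add, Finset.sum_add_distrib]

theorem uhat_cons (h : List (Fin K)) (a : Fin K) :
    uhat r p (a :: h) = uhat r p h + Pi.single a (r h a / p (uhat r p h) a) := by
  funext k
  simp [uhat, Pi.single_apply]

variable {r p}

theorem expectation_const (hsum : ∀ u, ∑ a, p u a = 1) (T : ℕ) (c : ℝ) :
    expectation r p T (fun _ => c) = c := by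
  induction T with
  | zero => rw [expectation_zero]
  | succ T ih => simpa only [expectation_succ, ← Finset.sum_mul, hsum, one_mul] using ih

theorem expectation_mono (hp : ∀ u a, 0 ≤ p u a) {G G' : List (Fin K) → ℝ}
    (hG : ∀ h, G h ≤ G' h) (T : ℕ) : expectation r p T G ≤ expectation r p T G' := by
  induction T generalizing G G' with
  | zero => simpa only [expectation_zero] using hG []
  | succ T ih =>
    rw [expectation_succ, expectation_succ]
    exact ih fun h => Finset.sum_le_sum fun a _ => mul_le_mul_of_nonneg_left (hG _) (hp _ a)

theorem expectation_le_of_forall_sum_le (hp : ∀ u a, 0 ≤ p u a) (hsum : ∀ u, ∑ a, p u a = 1)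
    {G : List (Fin K) → ℝ} {c : ℝ}
    (hG : ∀ h, ∑ a, p (uhat r p h) a * G (a :: h) ≤ G h + c) (T : ℕ) :
    expectation r p T G ≤ G [] + T * c := by
  induction T with
  | zero => simp [expectation_zero]
  | succ T ih =>
    calc expectation r p (T + 1) G ≤ expectation r p T (fun h => G h + c) := by
          rw [expectation_succ]; exact expectation_mono hp hG T
      _ = expectation r p T G + c := by rw [expectation_add, expectation_const hsum]
      _ ≤ G [] + (T + 1 : ℕ) * c := by push_cast; linarith

/-- The importance-weighted estimate is unbiased: `cumArm r k - uhat r p · k` is a martingale. -/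
theorem sum_mul_cumArm_sub_uhat_cons (hsum : ∀ u, ∑ a, p u a = 1) (hne : ∀ u a, p u a ≠ 0)
    (h : List (Fin K)) (k : Fin K) :
    ∑ a, p (uhat r p h) a * (cumArm r k (a :: h) - uhat r p (a :: h) k) =
      cumArm r k h - uhat r p h k := by
  have hterm : ∀ a, p (uhat r p h) a * (cumArm r k (a :: h) - uhat r p (a :: h) k) =
      p (uhat r p h) a * (cumArm r k h - uhat r p h k + r h k) - if k = a then r h k else 0 := by
    intro a
    simp only [cumArm, uhat_cons, Pi.add_apply, Pi.single_apply]
    split_ifs with hka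
    · subst hka; field_simp [hne]; ring
    · ring
  rw [Finset.sum_congr rfl fun a _ => hterm a, Finset.sum_sub_distrib, ← Finset.sum_mul, hsum,
    Finset.sum_ite_eq]
  simp

theorem regret_le_of_potential (hp : ∀ u a, 0 < p u a) (hsum : ∀ u, ∑ a, p u a = 1)
    {Φ : (Fin K → ℝ) → ℝ} {c : ℝ} (hΦ : ∀ u k, u k ≤ Φ u)
    (hstep : ∀ h, ∑ a, p (uhat r p h) a * (Φ (uhat r p (a :: h)) - r h a) ≤ Φ (uhat r p h) + c)
    (T : ℕ) : regret K T r p ≤ Φ 0 + T * c := by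
  have hp₀ : ∀ u a, 0 ≤ p u a := fun u a => (hp u a).le
  have : Nonempty (Fin K) := by
    by_contra hK
    simpa [not_nonempty_iff.1 hK] using hsum 0
  rw [regret_eq_expectation, sub_le_iff_le_add]
  refine ciSup_le fun k => ?_
  set G := fun h => cumArm r k h - uhat r p h k + (Φ (uhat r p h) - cumReward r h)
  have hG : ∀ h, ∑ a, p (uhat r p h) a * G (a :: h) ≤ G h + c := fun h => by
    have hreward : ∀ a, p (uhat r p h) a * (Φ (uhat r p (a :: h)) - cumReward r (a :: h)) =
        p (uhat r p h) a * (Φ (uhat r p (a :: h)) - r h a) - p (uhat r p h) a * cumReward r h :=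
      fun a => by rw [cumReward]; ring
    simp only [G, mul_add, Finset.sum_add_distrib,
      sum_mul_cumArm_sub_uhat_cons hsum (fun u a => (hp u a).ne'), hreward, Finset.sum_sub_distrib,
      ← Finset.sum_mul, hsum, one_mul]
    linarith [hstep h]
  have hG₀ : G [] = Φ 0 := by simp [G, cumArm, uhat, cumReward]; rfl
  calc expectation r p T (cumArm r k)
      ≤ expectation r p T (fun h => G h + cumReward r h) :=
        expectation_mono hp₀ (fun h => by linarith [hΦ (uhat r p h) k]) T
    _ ≤ Φ 0 + T * c + expectation r p T (cumReward r) := by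
        rw [expectation_add]
        linarith [expectation_le_of_forall_sum_le hp₀ hsum hG T, hG₀]

end Bandit

theorem stmt17_general (K : ℕ) (F F' : ℝ → ℝ)
    -- `F` is a marginal generator with strictly positive values:
    (hFmono : StrictMono F)
    (hFderiv : ∀ s, HasDerivAt F (F' s) s)
    (hFbot : ∀ ε > (0:ℝ), ∃ s, F s < ε)
    (hFtop : ∀ ε > (0:ℝ), ∃ s, 1 - ε < F s)
    (hFint : IntegrableOn (quantile F) (Ioo (0:ℝ) 1))
    (hFzero : ∫ t in (0:ℝ)..1, quantile F t = 0)
    (η : ℝ) (hη : 0 < η)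
    (γ C : ℝ) (hγ : γ ∈ Ioo (1:ℝ) 2) (hC : 0 < C)
    (hgrowth : ∀ q ∈ Ioo (0:ℝ) 1, F' (quantile F q) ≤ C * q ^ γ)
    (f : ℝ → ℝ) (hf : ∀ s ∈ Icc (0:ℝ) 1, f s = ∫ t in (0:ℝ)..s, quantile F t)
    (p : (Fin K → ℝ) → (Fin K → ℝ))
    (hp : ∀ u, p u ∈ simplex K ∧ (∀ k, 0 < p u k) ∧
      IsMaxOn (fun q => ∑ k, u k * q k - η * ∑ k, f (q k)) (simplex K) (p u) ∧
      ∀ q ∈ simplex K,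
        IsMaxOn (fun q' => ∑ k, u k * q' k - η * ∑ k, f (q' k)) (simplex K) q → q = p u)
    (T : ℕ)
    (r : List (Fin K) → Fin K → ℝ) (hr : ∀ h k, r h k ∈ Icc (-1:ℝ) 0) :
    regret K T r p ≤
      -η * K * f (1 / K) + C * T * (K : ℝ) ^ ((2:ℝ) - γ) / (2 * η) := by
  have hFc : Continuous F := continuous_iff_continuousAt.2 fun s => (hFderiv s).continuousAt
  have hrange := Ioo_subset_range_of_continuous hFc hFbot hFtop
  have hftrl : IsFtrlMap η f p := ⟨fun u => (hp u).1, fun u => (hp u).2.1, fun u => (hp u).2.2.1⟩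
  have hf₀ : f 0 = 0 := by simp [hf 0 (left_mem_Icc.2 zero_le_one)]
  have hf₁ : f 1 = 0 := by rw [hf 1 (right_mem_Icc.2 zero_le_one), hFzero]
  have hf' := fun s => hasDerivAt_of_eq_integral_quantile (s := s) hFmono hFc hrange hFint hf
  have hquantile := fun x y (hy : 0 < y) hyx hx => sub_le_mul_quantile_sub (x := x)
    hFmono hrange hFderiv (by linarith [hγ.1]) hC.le hgrowth hy hyx hx
  have hΦ₀ : ftrlPotential η f p 0 ≤ -η * K * f (1 / K) := by
    have := (convexOn_of_eq_integral_quantile hFmono hFc hrange hFint hf).card_mul_le_sum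
      (fun k => ⟨(hftrl.pos 0 k).le, hftrl.apply_le_one 0 k⟩) (hftrl.sum_eq_one 0)
    simp only [ftrlPotential, ftrlObjective, Pi.zero_apply, zero_mul, Finset.sum_const_zero,
      zero_sub]
    linarith [mul_le_mul_of_nonneg_left this hη.le]
  calc regret K T r p ≤ ftrlPotential η f p 0 + T * (C * (K : ℝ) ^ (2 - γ) / (2 * η)) :=
        regret_le_of_potential hftrl.pos hftrl.sum_eq_one (hftrl.apply_le_potential hf₀ hf₁)
          (fun h => by
            simpa only [uhat_cons] using hftrl.sum_mul_potential_add_single_sub_le hη hf' hC.le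
              hγ.1.le hγ.2.le hquantile (uhat r p h) (hr h)) T
    _ ≤ -η * K * f (1 / K) + T * (C * (K : ℝ) ^ (2 - γ) / (2 * η)) := add_le_add_left hΦ₀ _
    _ = -η * K * f (1 / K) + C * T * (K : ℝ) ^ ((2:ℝ) - γ) / (2 * η) := by ring

theorem stmt17 (K : ℕ) (hK : 1 ≤ K) (F F' : ℝ → ℝ)
    -- `F` is a marginal generator with strictly positive values:
    (hFmono : StrictMono F)
    (hFderiv : ∀ s, HasDerivAt F (F' s) s)
    (hFpos : ∀ s, 0 < F s)
    (hFbot : ∀ ε > (0:ℝ), ∃ s, F s < ε)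
    (hFtop : ∀ ε > (0:ℝ), ∃ s, 1 - ε < F s)
    (hFint : IntegrableOn (quantile F) (Ioo (0:ℝ) 1))
    (hFzero : ∫ t in (0:ℝ)..1, quantile F t = 0)
    (η : ℝ) (hη : 0 < η)
    (γ C : ℝ) (hγ : γ ∈ Ioo (1:ℝ) 2) (hC : 0 < C)
    (hgrowth : ∀ q ∈ Ioo (0:ℝ) 1, F' (quantile F q) ≤ C * q ^ γ)
    (f : ℝ → ℝ) (hf : ∀ s ∈ Icc (0:ℝ) 1, f s = ∫ t in (0:ℝ)..s, quantile F t)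
    (p : (Fin K → ℝ) → (Fin K → ℝ))
    (hp : ∀ u, p u ∈ simplex K ∧ (∀ k, 0 < p u k) ∧
      IsMaxOn (fun q => ∑ k, u k * q k - η * ∑ k, f (q k)) (simplex K) (p u) ∧
      ∀ q ∈ simplex K,
        IsMaxOn (fun q' => ∑ k, u k * q' k - η * ∑ k, f (q' k)) (simplex K) q → q = p u)
    (T : ℕ) (hT : 1 ≤ T)
    (r : List (Fin K) → Fin K → ℝ) (hr : ∀ h k, r h k ∈ Icc (-1:ℝ) 0) :
    regret K T r p ≤
      -η * K * f (1 / K) + C * T * (K : ℝ) ^ ((2:ℝ) - γ) / (2 * η) :=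
  stmt17_general K F F' hFmono hFderiv hFbot hFtop hFint hFzero η hη γ C hγ hC hgrowth f hf p hp T r
    hr
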